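/- Almost-concavity of the batch regret functional (Lemma 1). Define, for a prior π on Φ, J(π) = I_π(Y_n;Φ|Y^{n−1}) − Σ_{φ∈Φ} π(φ) D_c(P_φ‖Θ). Then for any two priors π_0, π_1 on Φ and any λ ∈ [0,1]: J(λπ_1 + (1−λ)π_0) ≤ λ J(π_1) + (1−λ) J(π_0) + h(λ), where h(λ) = −λ log λ − (1−λ) log(1−λ) is the binary entropy function. -/
import Mathlib


open scoped BigOperators

noncomputable section

/-- A probability mass function on a finite type, represented as a real-valued function. -/
def IsPMF {α : Type*} [Fintype α] (p : α → ℝ) : Prop :=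
  (∀ a, 0 ≤ p a) ∧ ∑ a, p a = 1

variable {𝒴 Φ : Type*}

/-- The past `y^{n-1}` of a sequence `y^n` (sequence length is `n+1`, so `n ≥ 1`). -/
def past {n : ℕ} (y : Fin (n + 1) → 𝒴) : Fin n → 𝒴 := fun i => y i.castSucc

/-- The last symbol `y_n` of a sequence `y^n`. -/
def lastSym {n : ℕ} (y : Fin (n + 1) → 𝒴) : 𝒴 := y (Fin.last n)

open Classical in
/-- Marginal probability of the first `n` coordinates. -/
def margPast [Fintype 𝒴] {n : ℕ} (f : (Fin (n + 1) → 𝒴) → ℝ) (z : Fin n → 𝒴) : ℝ :=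
  ∑ y : Fin (n + 1) → 𝒴, if past y = z then f y else 0

/-- The conditional probability `P(y_n | y^{n-1}) = P(y^n)/P(y^{n-1})`,
as a function of the full sequence. -/
def condLast [Fintype 𝒴] {n : ℕ} (f : (Fin (n + 1) → 𝒴) → ℝ) (y : Fin (n + 1) → 𝒴) : ℝ :=
  f y / margPast f (past y)

/-- The mixture distribution `Q_π(y) = Σ_φ π(φ) P_φ(y)` induced by a prior `π`. -/
def mixP {α : Type*} [Fintype Φ] (P : Φ → α → ℝ) (π : Φ → ℝ) : α → ℝ :=
  fun y => ∑ φ, π φ * P φ y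

/-- The conditional mutual information
`I_π(Y_n;Φ|Y^{n-1}) = Σ_φ π(φ) Σ_{y^n} P_φ(y^n) log (P_φ(y_n|y^{n-1})/Q_π(y_n|y^{n-1}))`. -/
def condMIb [Fintype 𝒴] [Fintype Φ] {n : ℕ} (P : Φ → (Fin (n + 1) → 𝒴) → ℝ)
    (π : Φ → ℝ) : ℝ :=
  ∑ φ, π φ * ∑ y, P φ y * Real.log (condLast (P φ) y / condLast (mixP P π) y)

/-- The conditional misspecification divergence
`D_c(P_φ‖Θ) = min_{θ∈Θ} Σ_{y^n} P_φ(y^n) log (P_φ(y_n|y^{n-1})/P_θ(y_n|y^{n-1}))`. -/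
def divCondToClass [Fintype 𝒴] [Fintype Φ] {n : ℕ} (P : Φ → (Fin (n + 1) → 𝒴) → ℝ)
    (Θ : Finset Φ) (hΘ : Θ.Nonempty) (φ : Φ) : ℝ :=
  Θ.inf' hΘ fun θ => ∑ y, P φ y * Real.log (condLast (P φ) y / condLast (P θ) y)


/-- The binary entropy function `h(λ) = −λ log λ − (1−λ) log(1−λ)`. -/
def binEnt (l : ℝ) : ℝ := -l * Real.log l - (1 - l) * Real.log (1 - l)

/-- The batch regret functional `J(π) = I_π(Y_n;Φ|Y^{n-1}) − Σ_φ π(φ) D_c(P_φ‖Θ)`. -/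
def Jfun [Fintype 𝒴] [Fintype Φ] {n : ℕ} (P : Φ → (Fin (n + 1) → 𝒴) → ℝ)
    (Θ : Finset Φ) (hΘ : Θ.Nonempty) (π : Φ → ℝ) : ℝ :=
  condMIb P π - ∑ φ, π φ * divCondToClass P Θ hΘ φ

section AuxLemmas

lemma margPast_nonneg [Fintype 𝒴] {n : ℕ} {f : (Fin (n + 1) → 𝒴) → ℝ}
    (hf : ∀ y, 0 ≤ f y) (z : Fin n → 𝒴) : 0 ≤ margPast f z := by
  classical
  refine Finset.sum_nonneg fun y _ => ?_
  by_cases h : past y = z <;> simp [h, hf y]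

lemma le_margPast [Fintype 𝒴] {n : ℕ} {f : (Fin (n + 1) → 𝒴) → ℝ}
    (hf : ∀ y, 0 ≤ f y) (y : Fin (n + 1) → 𝒴) : f y ≤ margPast f (past y) := by
  classical
  have h := Finset.single_le_sum
    (f := fun y' : Fin (n + 1) → 𝒴 => if past y' = past y then f y' else 0)
    (fun y' _ => by by_cases h : past y' = past y <;> simp [h, hf y'])
    (Finset.mem_univ y)
  simp only [if_pos rfl] at h
  simpa [margPast] using h

lemma sum_margPast [Fintype 𝒴] {n : ℕ} (f : (Fin (n + 1) → 𝒴) → ℝ) :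
    ∑ z, margPast f z = ∑ y, f y := by
  classical
  unfold margPast
  rw [Finset.sum_comm]
  exact Finset.sum_congr rfl fun y _ => by simp

lemma margPast_mono [Fintype 𝒴] {n : ℕ} {f g : (Fin (n + 1) → 𝒴) → ℝ}
    (h : ∀ y, f y ≤ g y) (z : Fin n → 𝒴) : margPast f z ≤ margPast g z := by
  classical
  refine Finset.sum_le_sum fun y _ => ?_
  by_cases hy : past y = z <;> simp [hy, h y]

lemma margPast_smul [Fintype 𝒴] {n : ℕ} (c : ℝ) (f : (Fin (n + 1) → 𝒴) → ℝ) (z : Fin n → 𝒴) :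
    margPast (fun y => c * f y) z = c * margPast f z := by
  classical
  unfold margPast
  rw [Finset.mul_sum]
  exact Finset.sum_congr rfl fun y _ => by split <;> simp

lemma kl_nonpos {α : Type*} [Fintype α] (p q : α → ℝ)
    (hp : ∀ a, 0 ≤ p a) (hq : ∀ a, 0 ≤ q a)
    (hac : ∀ a, p a ≠ 0 → q a ≠ 0)
    (hp1 : ∑ a, p a = 1) (hq1 : ∑ a, q a = 1) :
    ∑ a, p a * (Real.log (q a) - Real.log (p a)) ≤ 0 := by
  have key : ∀ a, p a * (Real.log (q a) - Real.log (p a)) ≤ q a - p a := by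
    intro a
    rcases eq_or_lt_of_le (hp a) with h | h
    · rw [← h]; simpa using hq a
    · have hqa : 0 < q a := lt_of_le_of_ne (hq a) (Ne.symm (hac a (ne_of_gt h)))
      have hd : 0 < q a / p a := div_pos hqa h
      have hlog := Real.log_le_sub_one_of_pos hd
      rw [Real.log_div (ne_of_gt hqa) (ne_of_gt h)] at hlog
      calc p a * (Real.log (q a) - Real.log (p a)) ≤ p a * (q a / p a - 1) :=
            mul_le_mul_of_nonneg_left hlog (le_of_lt h)
        _ = q a - p a := by field_simp
  calc ∑ a, p a * (Real.log (q a) - Real.log (p a)) ≤ ∑ a, (q a - p a) :=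
        Finset.sum_le_sum fun a _ => key a
    _ = 0 := by rw [Finset.sum_sub_distrib, hp1, hq1]; ring

lemma key_bound {𝒴 Φ : Type} [Fintype 𝒴] [Fintype Φ] {n : ℕ}
    (P : Φ → (Fin (n + 1) → 𝒴) → ℝ) (hP : ∀ φ, IsPMF (P φ))
    (ρ : Φ → ℝ) (hρ : IsPMF ρ)
    (R : (Fin (n + 1) → 𝒴) → ℝ) (hRnn : ∀ y, 0 ≤ R y) (hR1 : ∑ y, R y = 1)
    (c : ℝ) (hc : 0 < c) (hcR : ∀ y, c * mixP P ρ y ≤ R y) :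
    ∑ φ, ρ φ * ∑ y, P φ y * Real.log (condLast (P φ) y / condLast R y) ≤
      (∑ φ, ρ φ * ∑ y, P φ y * Real.log (condLast (P φ) y / condLast (mixP P ρ) y))
        - Real.log c := by
  classical
  set Q : (Fin (n + 1) → 𝒴) → ℝ := mixP P ρ with hQdef
  have hQnn : ∀ y, 0 ≤ Q y := fun y =>
    Finset.sum_nonneg fun φ _ => mul_nonneg (hρ.1 φ) ((hP φ).1 y)
  have hQ1 : ∑ y, Q y = 1 := by
    calc ∑ y, Q y = ∑ φ, ∑ y, ρ φ * P φ y := Finset.sum_comm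
      _ = ∑ φ, ρ φ := Finset.sum_congr rfl fun φ _ => by
            rw [← Finset.mul_sum, (hP φ).2, mul_one]
      _ = 1 := hρ.2
  have hQge : ∀ φ y, ρ φ * P φ y ≤ Q y := fun φ y =>
    Finset.single_le_sum (fun φ' _ => mul_nonneg (hρ.1 φ') ((hP φ').1 y))
      (Finset.mem_univ φ)
  set g : (Fin (n + 1) → 𝒴) → ℝ := fun y =>
    (Real.log (Q y) - Real.log (margPast Q (past y)))
      - (Real.log (R y) - Real.log (margPast R (past y))) with hgdef
  -- termwise change-of-mixture identity
  have hid : ∀ φ y, ρ φ * (P φ y * Real.log (condLast (P φ) y / condLast R y)) =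
      ρ φ * (P φ y * Real.log (condLast (P φ) y / condLast Q y)) + ρ φ * P φ y * g y := by
    intro φ y
    rcases eq_or_lt_of_le (hρ.1 φ) with hφ | hφ
    · rw [← hφ]; ring
    rcases eq_or_lt_of_le ((hP φ).1 y) with hy | hy
    · rw [← hy]; ring
    have hmargP : 0 < margPast (P φ) (past y) := lt_of_lt_of_le hy (le_margPast (hP φ).1 y)
    have hQy : 0 < Q y := lt_of_lt_of_le (mul_pos hφ hy) (hQge φ y)
    have hmQ : 0 < margPast Q (past y) := lt_of_lt_of_le hQy (le_margPast hQnn y)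
    have hRy : 0 < R y := lt_of_lt_of_le (mul_pos hc hQy) (hcR y)
    have hmR : 0 < margPast R (past y) := lt_of_lt_of_le hRy (le_margPast hRnn y)
    have e1 : Real.log (condLast (P φ) y / condLast R y) =
        (Real.log (P φ y) - Real.log (margPast (P φ) (past y)))
          - (Real.log (R y) - Real.log (margPast R (past y))) := by
      unfold condLast
      rw [Real.log_div (div_pos hy hmargP).ne' (div_pos hRy hmR).ne',
        Real.log_div hy.ne' hmargP.ne', Real.log_div hRy.ne' hmR.ne']
    have e2 : Real.log (condLast (P φ) y / condLast Q y) =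
        (Real.log (P φ y) - Real.log (margPast (P φ) (past y)))
          - (Real.log (Q y) - Real.log (margPast Q (past y))) := by
      unfold condLast
      rw [Real.log_div (div_pos hy hmargP).ne' (div_pos hQy hmQ).ne',
        Real.log_div hy.ne' hmargP.ne', Real.log_div hQy.ne' hmQ.ne']
    rw [e1, e2, hgdef]
    ring
  -- sum the identity
  have hsum : ∑ φ, ρ φ * ∑ y, P φ y * Real.log (condLast (P φ) y / condLast R y) =
      (∑ φ, ρ φ * ∑ y, P φ y * Real.log (condLast (P φ) y / condLast Q y))
        + ∑ y, Q y * g y := by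
    have e3 : ∑ y, Q y * g y = ∑ φ, ∑ y, ρ φ * P φ y * g y := by
      rw [Finset.sum_comm]
      refine Finset.sum_congr rfl fun y _ => ?_
      rw [hQdef]
      show (∑ φ, ρ φ * P φ y) * g y = _
      rw [Finset.sum_mul]
    rw [e3, ← Finset.sum_add_distrib]
    refine Finset.sum_congr rfl fun φ _ => ?_
    rw [Finset.mul_sum, Finset.mul_sum, ← Finset.sum_add_distrib]
    exact Finset.sum_congr rfl fun y _ => hid φ y
  rw [hsum]
  have hsplit : ∑ y, Q y * g y =
      (∑ y, Q y * (Real.log (Q y) - Real.log (R y)))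
        + ∑ y, Q y * (Real.log (margPast R (past y)) - Real.log (margPast Q (past y))) := by
    rw [← Finset.sum_add_distrib]
    exact Finset.sum_congr rfl fun y _ => by rw [hgdef]; ring
  -- T1 bound
  have hT1 : ∑ y, Q y * (Real.log (Q y) - Real.log (R y)) ≤ -Real.log c := by
    have hpt : ∀ y, Q y * (Real.log (Q y) - Real.log (R y)) ≤ Q y * (-Real.log c) := by
      intro y
      rcases eq_or_lt_of_le (hQnn y) with h | h
      · rw [← h]; simp
      · have hRy : 0 < R y := lt_of_lt_of_le (mul_pos hc h) (hcR y)
        have hle : Real.log (c * Q y) ≤ Real.log (R y) :=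
          Real.log_le_log (mul_pos hc h) (hcR y)
        rw [Real.log_mul hc.ne' h.ne'] at hle
        exact mul_le_mul_of_nonneg_left (by linarith) h.le
    calc ∑ y, Q y * (Real.log (Q y) - Real.log (R y)) ≤ ∑ y, Q y * (-Real.log c) :=
          Finset.sum_le_sum fun y _ => hpt y
      _ = -Real.log c := by rw [← Finset.sum_mul, hQ1, one_mul]
  -- T2 bound
  have hT2 : ∑ y, Q y * (Real.log (margPast R (past y)) - Real.log (margPast Q (past y))) ≤ 0 := by
    have hregroup : ∑ y, Q y * (Real.log (margPast R (past y)) - Real.log (margPast Q (past y))) =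
        ∑ z, margPast Q z * (Real.log (margPast R z) - Real.log (margPast Q z)) := by
      rw [eq_comm]
      calc ∑ z, margPast Q z * (Real.log (margPast R z) - Real.log (margPast Q z))
          = ∑ z, ∑ y, (if past y = z then
              Q y * (Real.log (margPast R z) - Real.log (margPast Q z)) else 0) := by
            refine Finset.sum_congr rfl fun z _ => ?_
            rw [margPast, Finset.sum_mul]
            exact Finset.sum_congr rfl fun y _ => by split <;> simp
        _ = ∑ y, ∑ z, (if past y = z then
              Q y * (Real.log (margPast R z) - Real.log (margPast Q z)) else 0) :=
            Finset.sum_comm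
        _ = ∑ y, Q y * (Real.log (margPast R (past y)) - Real.log (margPast Q (past y))) := by
            refine Finset.sum_congr rfl fun y _ => ?_
            simp
    rw [hregroup]
    refine kl_nonpos (margPast Q) (margPast R) (margPast_nonneg hQnn) (margPast_nonneg hRnn)
      (fun z hz => ?_) (by rw [sum_margPast, hQ1]) (by rw [sum_margPast, hR1])
    have h1 : 0 < margPast Q z := lt_of_le_of_ne (margPast_nonneg hQnn z) (Ne.symm hz)
    have h2 : c * margPast Q z ≤ margPast R z := by
      rw [← margPast_smul]
      exact margPast_mono hcR z
    exact (lt_of_lt_of_le (mul_pos hc h1) h2).ne'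
  linarith [hsplit, hT1, hT2]

end AuxLemmas

/-- **Lemma 1** (almost-concavity of the batch regret functional):
`J(λπ₁ + (1−λ)π₀) ≤ λ J(π₁) + (1−λ) J(π₀) + h(λ)`. -/
theorem batch_regret_functional_almost_concave
    (𝒴 Φ : Type) [Fintype 𝒴] [Nonempty 𝒴] [Fintype Φ] [Nonempty Φ] (n : ℕ)
    (P : Φ → (Fin (n + 1) → 𝒴) → ℝ) (hP : ∀ φ, IsPMF (P φ))
    (Θ : Finset Φ) (hΘ : Θ.Nonempty)
    (π₀ π₁ : Φ → ℝ) (hπ₀ : IsPMF π₀) (hπ₁ : IsPMF π₁)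
    (l : ℝ) (hl : l ∈ Set.Icc (0 : ℝ) 1) :
    Jfun P Θ hΘ (fun φ => l * π₁ φ + (1 - l) * π₀ φ) ≤
      l * Jfun P Θ hΘ π₁ + (1 - l) * Jfun P Θ hΘ π₀ + binEnt l := by
  obtain ⟨hl0, hl1⟩ := hl
  rcases eq_or_lt_of_le hl0 with h0 | h0
  · have hfun : (fun φ => l * π₁ φ + (1 - l) * π₀ φ) = π₀ := by
      funext φ; rw [← h0]; ring
    rw [hfun, ← h0]
    simp [binEnt]
  rcases eq_or_lt_of_le hl1 with h1 | h1
  · have hfun : (fun φ => l * π₁ φ + (1 - l) * π₀ φ) = π₁ := by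
      funext φ; rw [h1]; ring
    rw [hfun, h1]
    simp [binEnt]
  have hl' : 0 < 1 - l := by linarith
  set πl : Φ → ℝ := fun φ => l * π₁ φ + (1 - l) * π₀ φ with hπl
  have hQl : ∀ y, mixP P πl y = l * mixP P π₁ y + (1 - l) * mixP P π₀ y := by
    intro y
    show (∑ φ, (l * π₁ φ + (1 - l) * π₀ φ) * P φ y) = _
    unfold mixP
    rw [Finset.mul_sum, Finset.mul_sum, ← Finset.sum_add_distrib]
    exact Finset.sum_congr rfl fun φ _ => by ring
  have hQ₁nn : ∀ y, 0 ≤ mixP P π₁ y := fun y =>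
    Finset.sum_nonneg fun φ _ => mul_nonneg (hπ₁.1 φ) ((hP φ).1 y)
  have hQ₀nn : ∀ y, 0 ≤ mixP P π₀ y := fun y =>
    Finset.sum_nonneg fun φ _ => mul_nonneg (hπ₀.1 φ) ((hP φ).1 y)
  have hQlnn : ∀ y, 0 ≤ mixP P πl y := fun y => by
    rw [hQl y]
    have := hQ₁nn y; have := hQ₀nn y; nlinarith
  have hsumMix : ∀ (π : Φ → ℝ), IsPMF π → ∑ y, mixP P π y = 1 := by
    intro π hπ
    calc ∑ y, mixP P π y = ∑ φ, ∑ y, π φ * P φ y := Finset.sum_comm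
      _ = ∑ φ, π φ := Finset.sum_congr rfl fun φ _ => by
            rw [← Finset.mul_sum, (hP φ).2, mul_one]
      _ = 1 := hπ.2
  have hπlpmf : IsPMF πl := by
    constructor
    · intro φ
      have := hπ₁.1 φ; have := hπ₀.1 φ
      have h1 : 0 ≤ l * π₁ φ := mul_nonneg hl0 ‹0 ≤ π₁ φ›
      have h2 : 0 ≤ (1 - l) * π₀ φ := mul_nonneg hl'.le ‹0 ≤ π₀ φ›
      simpa [hπl] using add_nonneg h1 h2
    · show (∑ φ, (l * π₁ φ + (1 - l) * π₀ φ)) = 1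
      rw [Finset.sum_add_distrib, ← Finset.mul_sum, ← Finset.mul_sum, hπ₁.2, hπ₀.2]
      ring
  have hQl1 : ∑ y, mixP P πl y = 1 := hsumMix πl hπlpmf
  have key1 := key_bound P hP π₁ hπ₁ (mixP P πl) hQlnn hQl1 l h0 (fun y => by
    rw [hQl y]
    have := mul_nonneg hl'.le (hQ₀nn y)
    linarith)
  have key2 := key_bound P hP π₀ hπ₀ (mixP P πl) hQlnn hQl1 (1 - l) hl' (fun y => by
    rw [hQl y]
    have := mul_nonneg hl0 (hQ₁nn y)
    linarith)
  have hMI : condMIb P πl ≤ l * condMIb P π₁ + (1 - l) * condMIb P π₀ + binEnt l := by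
    have expand : condMIb P πl =
        l * (∑ φ, π₁ φ * ∑ y, P φ y * Real.log (condLast (P φ) y / condLast (mixP P πl) y))
          + (1 - l) * (∑ φ, π₀ φ * ∑ y, P φ y *
              Real.log (condLast (P φ) y / condLast (mixP P πl) y)) := by
      unfold condMIb
      rw [Finset.mul_sum, Finset.mul_sum, ← Finset.sum_add_distrib]
      exact Finset.sum_congr rfl fun φ _ => by simp [hπl]; ring
    have key1' : (∑ φ, π₁ φ * ∑ y, P φ y *
        Real.log (condLast (P φ) y / condLast (mixP P πl) y)) ≤
        condMIb P π₁ - Real.log l := key1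
    have key2' : (∑ φ, π₀ φ * ∑ y, P φ y *
        Real.log (condLast (P φ) y / condLast (mixP P πl) y)) ≤
        condMIb P π₀ - Real.log (1 - l) := key2
    calc condMIb P πl ≤ l * (condMIb P π₁ - Real.log l)
          + (1 - l) * (condMIb P π₀ - Real.log (1 - l)) := by
          rw [expand]
          exact add_le_add (mul_le_mul_of_nonneg_left key1' hl0)
            (mul_le_mul_of_nonneg_left key2' hl'.le)
      _ = l * condMIb P π₁ + (1 - l) * condMIb P π₀ + binEnt l := by
          unfold binEnt; ring
  have hD : ∑ φ, πl φ * divCondToClass P Θ hΘ φ =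
      l * ∑ φ, π₁ φ * divCondToClass P Θ hΘ φ
        + (1 - l) * ∑ φ, π₀ φ * divCondToClass P Θ hΘ φ := by
    rw [Finset.mul_sum, Finset.mul_sum, ← Finset.sum_add_distrib]
    exact Finset.sum_congr rfl fun φ _ => by simp [hπl]; ring
  show condMIb P πl - ∑ φ, πl φ * divCondToClass P Θ hΘ φ ≤ _
  unfold Jfun
  rw [hD]
  linarith [hMI]
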